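/- Let A have restricted isometry constants δ_q. Let ŵ ∈ W^k satisfy supp(x_S) ⊆ supp(ŵ), let x^p ∈ ℝⁿ be k-sparse, and let u^p = x^p + Aᵀ(y − A x^p). Then ‖y − A(u^p ⊗ ŵ)‖₂ ≤ δ_{2k}·√(1+δ_k)·‖x_S − x^p‖₂ + √(1+δ_k)·‖Aᵀν'‖₂ + ‖ν'‖₂. -/

import Mathlib

open Finset

noncomputable def nsq {ι : Type*} [Fintype ι] (x : ι → ℝ) : ℝ := ∑ i, (x i) ^ 2

noncomputable def n2 {ι : Type*} [Fintype ι] (x : ι → ℝ) : ℝ := Real.sqrt (nsq x)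

noncomputable def supp {n : ℕ} (x : Fin n → ℝ) : Finset (Fin n) :=
  Finset.univ.filter (fun i => x i ≠ 0)

def Sparse {n : ℕ} (k : ℕ) (x : Fin n → ℝ) : Prop := (supp x).card ≤ k

def restr {n : ℕ} (x : Fin n → ℝ) (T : Finset (Fin n)) : Fin n → ℝ :=
  fun i => if i ∈ T then x i else 0

def SatRIP {m n : ℕ} (A : Matrix (Fin m) (Fin n) ℝ) (q : ℕ) (δ : ℝ) : Prop :=
  ∀ z : Fin n → ℝ, Sparse q z →
    (1 - δ) * nsq z ≤ nsq (A.mulVec z) ∧ nsq (A.mulVec z) ≤ (1 + δ) * nsq z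

/-- `δ` is the `q`-th order restricted isometry constant of `A`:
the smallest `δ' ≥ 0` such that `(1-δ')‖z‖² ≤ ‖Az‖² ≤ (1+δ')‖z‖²` for all `q`-sparse `z`. -/
def IsRIC {m n : ℕ} (A : Matrix (Fin m) (Fin n) ℝ) (q : ℕ) (δ : ℝ) : Prop :=
  IsLeast {δ' : ℝ | 0 ≤ δ' ∧ SatRIP A q δ'} δ

/-- membership in `W^k`: binary vectors with exactly `k` entries equal to 1. -/
def InW {n : ℕ} (k : ℕ) (w : Fin n → ℝ) : Prop :=
  (∀ i, w i = 0 ∨ w i = 1) ∧ (Finset.univ.filter (fun i => w i = 1)).card = k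

/-- membership in the polytope `P^k`. -/
def InP {n : ℕ} (k : ℕ) (w : Fin n → ℝ) : Prop :=
  (∑ i, w i) = (k : ℝ) ∧ ∀ i, 0 ≤ w i ∧ w i ≤ 1

/-- `S` is an index set of the `k` largest absolute entries of `x`. -/
def IsTopK {n : ℕ} (x : Fin n → ℝ) (k : ℕ) (S : Finset (Fin n)) : Prop :=
  S.card = k ∧ ∀ i ∈ S, ∀ j ∉ S, |x j| ≤ |x i|

/-- `d` is a hard thresholding `H_k(z)` of `z`. -/
def IsHT {n : ℕ} (k : ℕ) (z d : Fin n → ℝ) : Prop :=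
  Sparse k d ∧ ∀ d' : Fin n → ℝ, Sparse k d' → n2 (z - d) ≤ n2 (z - d')

/-- `w 0, …, w (ω-1)` are successive compression minimizers at `x^p` (with `u^p = up`). -/
def SCM {m n : ℕ} (A : Matrix (Fin m) (Fin n) ℝ) (y : Fin m → ℝ) (k ω : ℕ)
    (up : Fin n → ℝ) (w : ℕ → Fin n → ℝ) : Prop :=
  ∀ j < ω, InP k (w j) ∧ ∀ v : Fin n → ℝ, InP k v →
    n2 (y - A.mulVec (up * (∏ l ∈ Finset.range j, w l) * w j)) ≤
    n2 (y - A.mulVec (up * (∏ l ∈ Finset.range j, w l) * v))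

/-- the `ℓ∞` norm of `x` restricted to `T` (zero if `T` is empty). -/
noncomputable def linfT {n : ℕ} (x : Fin n → ℝ) (T : Finset (Fin n)) : ℝ :=
  if h : T.Nonempty then T.sup' h (fun j => |x j|) else 0

open Matrix

/-!
Write `h = x_S - x^p` and `T = supp ŵ`. Since `x_S` lives on `T`, the residual
`y - A (u^p ⊗ ŵ)` equals `A ((h - AᵀA h)_T - (Aᵀν')_T) + ν'`, and the vector in parentheses is
`k`-sparse, so the RIP of order `k` bounds its image by `√(1 + δ_k)` times its norm.
The one real estimate is `‖((I - AᵀA) h)_T‖ ≤ δ_{2k} ‖h‖`: `h` and `T` live in a set of at most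
`2k` indices, and polarizing the RIP on such vectors gives `⟨u, v⟩ - ⟨Au, Av⟩ ≤ δ_{2k} ‖u‖ ‖v‖`,
which applied to `u = h`, `v = ((I - AᵀA) h)_T` yields `‖v‖² ≤ δ_{2k} ‖h‖ ‖v‖`.
-/

section Norms

variable {ι : Type*} [Fintype ι]

lemma nsq_eq_dotProduct (x : ι → ℝ) : nsq x = x ⬝ᵥ x := by
  simp only [nsq, dotProduct, sq]

lemma n2_eq_norm (x : ι → ℝ) : n2 x = ‖(WithLp.toLp 2 x : EuclideanSpace ℝ ι)‖ := by
  simp [n2, nsq, EuclideanSpace.norm_eq]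

lemma n2_nonneg (x : ι → ℝ) : 0 ≤ n2 x := Real.sqrt_nonneg _

lemma n2_sq (x : ι → ℝ) : n2 x ^ 2 = x ⬝ᵥ x := by
  rw [n2_eq_norm, ← real_inner_self_eq_norm_sq, EuclideanSpace.inner_eq_star_dotProduct]
  simp

lemma eq_zero_of_n2_eq_zero {x : ι → ℝ} (h : n2 x = 0) : x = 0 := by
  rw [n2_eq_norm, norm_eq_zero] at h
  simpa using congrArg WithLp.ofLp h

lemma n2_add_le (x y : ι → ℝ) : n2 (x + y) ≤ n2 x + n2 y := by
  simpa only [n2_eq_norm, WithLp.toLp_add] using norm_add_le _ _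

lemma n2_sub_le (x y : ι → ℝ) : n2 (x - y) ≤ n2 x + n2 y := by
  simpa only [n2_eq_norm, WithLp.toLp_sub] using norm_sub_le _ _

end Norms

section Support

variable {n : ℕ}

@[simp]
lemma mem_supp {x : Fin n → ℝ} {i : Fin n} : i ∈ supp x ↔ x i ≠ 0 := by
  simp [supp]

lemma supp_add_subset (x y : Fin n → ℝ) : supp (x + y) ⊆ supp x ∪ supp y := by
  intro i; simp only [mem_supp, Finset.mem_union, Pi.add_apply]; contrapose!; simp +contextual

lemma supp_sub_subset (x y : Fin n → ℝ) : supp (x - y) ⊆ supp x ∪ supp y := by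
  intro i; simp only [mem_supp, Finset.mem_union, Pi.sub_apply]; contrapose!; simp +contextual

lemma supp_smul_subset (c : ℝ) (x : Fin n → ℝ) : supp (c • x) ⊆ supp x := by
  intro i; simp +contextual

lemma supp_restr_subset (x : Fin n → ℝ) (T : Finset (Fin n)) : supp (restr x T) ⊆ T := by
  intro i; simp only [mem_supp, restr]; split_ifs <;> simp_all

lemma sparse_of_supp_subset {q : ℕ} {z : Fin n → ℝ} {Ω : Finset (Fin n)} (h : supp z ⊆ Ω)
    (hΩ : Ω.card ≤ q) : Sparse q z :=
  (Finset.card_le_card h).trans hΩ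

lemma sparse_restr {q : ℕ} (x : Fin n → ℝ) {T : Finset (Fin n)} (hT : T.card ≤ q) :
    Sparse q (restr x T) :=
  sparse_of_supp_subset (supp_restr_subset x T) hT

lemma restr_add_restr_compl (x : Fin n → ℝ) (S : Finset (Fin n)) :
    restr x S + restr x Sᶜ = x := by
  ext i; by_cases hi : i ∈ S <;> simp [restr, hi]

lemma restr_eq_self {x : Fin n → ℝ} {T : Finset (Fin n)} (h : supp x ⊆ T) : restr x T = x := by
  ext i; by_cases hi : i ∈ T
  · simp [restr, hi]
  · simpa [restr, hi, eq_comm] using mt (@h i) hi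

lemma restr_sub (x y : Fin n → ℝ) (T : Finset (Fin n)) :
    restr (x - y) T = restr x T - restr y T := by
  ext i; by_cases hi : i ∈ T <;> simp [restr, hi]

lemma restr_dotProduct_restr (x : Fin n → ℝ) (T : Finset (Fin n)) :
    restr x T ⬝ᵥ restr x T = restr x T ⬝ᵥ x := by
  refine Finset.sum_congr rfl fun i _ => ?_
  by_cases hi : i ∈ T <;> simp [restr, hi]

lemma n2_restr_le (x : Fin n → ℝ) (T : Finset (Fin n)) : n2 (restr x T) ≤ n2 x :=
  Real.sqrt_le_sqrt <| Finset.sum_le_sum fun i _ => by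
    by_cases hi : i ∈ T <;> simp [restr, hi, sq_nonneg]

lemma InW.card_supp {k : ℕ} {w : Fin n → ℝ} (hw : InW k w) : (supp w).card = k := by
  rw [← hw.2]; congr 1; ext i; rcases hw.1 i with h | h <;> simp [supp, h]

lemma InW.mul_eq_restr {k : ℕ} {w : Fin n → ℝ} (hw : InW k w) (z : Fin n → ℝ) :
    z * w = restr z (supp w) := by
  ext i; rcases hw.1 i with h | h <;> simp [restr, h]

end Support

namespace SatRIP

variable {m n q : ℕ} {A : Matrix (Fin m) (Fin n) ℝ} {δ : ℝ}

lemma n2_mulVec_le (hA : SatRIP A q δ) {z : Fin n → ℝ} (hz : Sparse q z) :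
    n2 (A *ᵥ z) ≤ √(1 + δ) * n2 z := by
  have hz0 : 0 ≤ nsq z := Finset.sum_nonneg fun _ _ => sq_nonneg _
  rw [n2, n2, ← Real.sqrt_mul' _ hz0]
  exact Real.sqrt_le_sqrt (hA z hz).2

lemma abs_dotProduct_sub_le (hA : SatRIP A q δ) {z : Fin n → ℝ} (hz : Sparse q z) :
    |z ⬝ᵥ z - (A *ᵥ z) ⬝ᵥ (A *ᵥ z)| ≤ δ * (z ⬝ᵥ z) := by
  have := hA z hz
  rw [nsq_eq_dotProduct, nsq_eq_dotProduct] at this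
  rw [abs_le]; constructor <;> linarith [this.1, this.2]

lemma two_mul_dotProduct_sub_le (hA : SatRIP A q δ) {Ω : Finset (Fin n)} (hΩ : Ω.card ≤ q)
    {u v : Fin n → ℝ} (hu : supp u ⊆ Ω) (hv : supp v ⊆ Ω) :
    2 * (u ⬝ᵥ v - (A *ᵥ u) ⬝ᵥ (A *ᵥ v)) ≤ δ * (u ⬝ᵥ u + v ⬝ᵥ v) := by
  have hadd := abs_le.mp <| hA.abs_dotProduct_sub_le <|
    sparse_of_supp_subset ((supp_add_subset u v).trans (Finset.union_subset hu hv)) hΩ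
  have hsub := abs_le.mp <| hA.abs_dotProduct_sub_le <|
    sparse_of_supp_subset ((supp_sub_subset u v).trans (Finset.union_subset hu hv)) hΩ
  simp only [mulVec_add, mulVec_sub, add_dotProduct, dotProduct_add, sub_dotProduct,
    dotProduct_sub, dotProduct_comm v u, dotProduct_comm (A *ᵥ v) (A *ᵥ u)] at hadd hsub
  linarith [hadd.2, hsub.1]

lemma dotProduct_sub_le (hA : SatRIP A q δ) {Ω : Finset (Fin n)} (hΩ : Ω.card ≤ q)
    {u v : Fin n → ℝ} (hu : supp u ⊆ Ω) (hv : supp v ⊆ Ω) :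
    u ⬝ᵥ v - (A *ᵥ u) ⬝ᵥ (A *ᵥ v) ≤ δ * n2 u * n2 v := by
  rcases (mul_nonneg (n2_nonneg u) (n2_nonneg v)).eq_or_lt with h0 | hpos
  · rcases mul_eq_zero.mp h0.symm with h | h <;>
      obtain rfl := eq_zero_of_n2_eq_zero h <;> simp [h]
  -- rescaling `u` and `v` to the same length turns the bound of the polarization into `δ‖u‖‖v‖`
  have key := hA.two_mul_dotProduct_sub_le hΩ (u := n2 v • u) (v := n2 u • v)
    ((supp_smul_subset _ u).trans hu) ((supp_smul_subset _ v).trans hv)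
  simp only [mulVec_smul, smul_dotProduct, dotProduct_smul, smul_eq_mul, ← n2_sq] at key
  refine le_of_mul_le_mul_left ?_ hpos
  nlinarith [key]

lemma n2_restr_sub_gram_le (hA : SatRIP A q δ) (hδ : 0 ≤ δ) {Ω T : Finset (Fin n)}
    (hΩ : Ω.card ≤ q) (hT : T ⊆ Ω) {h : Fin n → ℝ} (hh : supp h ⊆ Ω) :
    n2 (restr (h - Aᵀ *ᵥ (A *ᵥ h)) T) ≤ δ * n2 h := by
  set g := restr (h - Aᵀ *ᵥ (A *ᵥ h)) T
  have hg : n2 g ^ 2 = h ⬝ᵥ g - (A *ᵥ h) ⬝ᵥ (A *ᵥ g) := by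
    rw [n2_sq, restr_dotProduct_restr, dotProduct_sub, dotProduct_mulVec, vecMul_transpose,
      dotProduct_comm g, dotProduct_comm (A *ᵥ g)]
  have hle := hA.dotProduct_sub_le hΩ hh (v := g) ((supp_restr_subset _ T).trans hT)
  rcases (n2_nonneg g).eq_or_lt with h0 | hpos
  · rw [← h0]; exact mul_nonneg hδ (n2_nonneg h)
  exact le_of_mul_le_mul_right (by nlinarith) hpos

end SatRIP

lemma residual_restr_eq {m n : ℕ} (A : Matrix (Fin m) (Fin n) ℝ) {a xp up : Fin n → ℝ}
    {y ν' : Fin m → ℝ} {T : Finset (Fin n)} (hy : y = A *ᵥ a + ν') (ha : supp a ⊆ T)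
    (hup : up = xp + Aᵀ *ᵥ (y - A *ᵥ xp)) :
    y - A *ᵥ restr up T
      = A *ᵥ (restr ((a - xp) - Aᵀ *ᵥ (A *ᵥ (a - xp))) T - restr (Aᵀ *ᵥ ν') T) + ν' := by
  have hsub : a - up = (a - xp) - Aᵀ *ᵥ (A *ᵥ (a - xp)) - Aᵀ *ᵥ ν' := by
    rw [hup, hy, add_sub_right_comm, ← mulVec_sub, mulVec_add]; abel
  rw [← restr_sub, ← hsub, restr_sub, restr_eq_self ha, mulVec_sub, hy]; abel

theorem stmt14_general
    {m n : ℕ} (A : Matrix (Fin m) (Fin n) ℝ)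
    (x : Fin n → ℝ) (ν y : Fin m → ℝ) (hy : y = A.mulVec x + ν)
    (k : ℕ)
    (S : Finset (Fin n))
    (ν' : Fin m → ℝ) (hν' : ν' = A.mulVec (restr x Sᶜ) + ν)
    (δk δ2k : ℝ) (hδk : IsRIC A k δk) (hδ2k : IsRIC A (2 * k) δ2k)
    (wh : Fin n → ℝ) (hwh : InW k wh) (hsupp : supp (restr x S) ⊆ supp wh)
    (xp : Fin n → ℝ) (hxp : Sparse k xp)
    (up : Fin n → ℝ) (hup : up = xp + A.transpose.mulVec (y - A.mulVec xp)) :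
    n2 (y - A.mulVec (up * wh))
      ≤ δ2k * Real.sqrt (1 + δk) * n2 (restr x S - xp)
        + Real.sqrt (1 + δk) * n2 (A.transpose.mulVec ν')
        + n2 ν' := by
  obtain ⟨⟨-, hδk⟩, -⟩ := hδk
  obtain ⟨⟨hδ2k_nonneg, hδ2k⟩, -⟩ := hδ2k
  have hyS : y = A *ᵥ restr x S + ν' := by
    rw [hν', ← add_assoc, ← mulVec_add, restr_add_restr_compl, hy]
  have hΩ : (supp wh ∪ supp xp).card ≤ 2 * k :=
    (Finset.card_union_le _ _).trans <| by
      rw [hwh.card_supp, two_mul]; exact Nat.add_le_add_left hxp k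
  set T := supp wh
  set h := restr x S - xp
  set e := restr (h - Aᵀ *ᵥ (A *ᵥ h)) T - restr (Aᵀ *ᵥ ν') T with he_def
  have hgram : n2 (restr (h - Aᵀ *ᵥ (A *ᵥ h)) T) ≤ δ2k * n2 h :=
    hδ2k.n2_restr_sub_gram_le hδ2k_nonneg hΩ Finset.subset_union_left
      ((supp_sub_subset _ _).trans (Finset.union_subset_union hsupp subset_rfl))
  have hAe : n2 (A *ᵥ e) ≤ √(1 + δk) * n2 e :=
    hδk.n2_mulVec_le (by rw [he_def, ← restr_sub]; exact sparse_restr _ hwh.card_supp.le)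
  have he : n2 e ≤ δ2k * n2 h + n2 (Aᵀ *ᵥ ν') :=
    (n2_sub_le _ _).trans (add_le_add hgram (n2_restr_le _ _))
  rw [hwh.mul_eq_restr, residual_restr_eq A hyS hsupp hup]
  calc n2 (A *ᵥ e + ν') ≤ n2 (A *ᵥ e) + n2 ν' := n2_add_le _ _
    _ ≤ √(1 + δk) * (δ2k * n2 h + n2 (Aᵀ *ᵥ ν')) + n2 ν' := by gcongr; exact hAe.trans (by gcongr)
    _ = _ := by ring

theorem stmt14
    {m n : ℕ} (A : Matrix (Fin m) (Fin n) ℝ)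
    (x : Fin n → ℝ) (ν y : Fin m → ℝ) (hy : y = A.mulVec x + ν)
    (k : ℕ) (hk : 0 < k)
    (S : Finset (Fin n)) (hS : IsTopK x k S)
    (ν' : Fin m → ℝ) (hν' : ν' = A.mulVec (restr x Sᶜ) + ν)
    (δk δ2k : ℝ) (hδk : IsRIC A k δk) (hδ2k : IsRIC A (2 * k) δ2k)
    (wh : Fin n → ℝ) (hwh : InW k wh) (hsupp : supp (restr x S) ⊆ supp wh)
    (xp : Fin n → ℝ) (hxp : Sparse k xp)
    (up : Fin n → ℝ) (hup : up = xp + A.transpose.mulVec (y - A.mulVec xp)) :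
    n2 (y - A.mulVec (up * wh))
      ≤ δ2k * Real.sqrt (1 + δk) * n2 (restr x S - xp)
        + Real.sqrt (1 + δk) * n2 (A.transpose.mulVec ν')
        + n2 ν' :=
  stmt14_general A x ν y hy k S ν' hν' δk δ2k hδk hδ2k wh hwh hsupp xp hxp up hup
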